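/- Let e ≥ 1, ℓ ≥ 1, N > 0 be integers, let s = (s_1,…,s_ℓ) ∈ ℤ^ℓ, and let j ∈ {1,…,ℓ} satisfy s_j < s_i − N for all i ≠ j. If λ is an ℓ-multipartition with |λ| ≤ N that is singular for the level-ℓ Uglov crystal with charges s, then the component λ^{(j)} is divisible by e, i.e., λ^{(j)} = eμ part-wise for some partition μ. -/

import Mathlib

/-!
Encode `λ^{(j)}` by its charged β-numbers `B = {λ_k - k + s_j}`, the beads of an abacus: an
addable box of content `c` is a bead at `c` followed by a gap at `c + 1`, a removable box is a
gap at `c` followed by a bead at `c + 1`. Since `s_j` lies more than `N ≥ |λ|` below every other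
charge, the boxes of residue `m mod e` of the other components all have content `> m`. Hence the
part of the `m`-signature listed from the key of content `m` in component `j` onwards consists
exactly of the letters of `λ^{(j)}` of contents `m, m - e, m - 2e, …`. A word that keeps no `−`
after reduction has at least as many `+` as `−` in every suffix; for these suffixes this says that
`H(m)`, the number of gaps among `m, m - e, m - 2e, …`, weakly increases with `m` up to the
largest bead.

As `H(m) - H(m - e)` is `1` at a gap and `0` at a bead, `H` is constant on the `e` positions
below a bead, while the window sums `H(x) + ⋯ + H(x - e + 1)` grow by one at each gap. Comparing
them at two consecutive beads `λ_{k+1} - (k + 1) + s_j < λ_k - k + s_j` shows that `e` divides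
`λ_k - λ_{k+1}`.
-/

/-- A partition: a weakly decreasing, eventually zero sequence of nonnegative integers.
`part k` is the `(k+1)`-st part, i.e. the length of row `k+1`. -/
structure Partn where
  part : ℕ → ℕ
  antitone : ∀ k, part (k + 1) ≤ part k
  finite : ∃ N, ∀ k, N ≤ k → part k = 0

/-- The size `|λ| = Σ_k λ_k` of a partition (all parts beyond the chosen bound vanish). -/
noncomputable def Partn.size (p : Partn) : ℕ :=
  ∑ k ∈ Finset.range (Classical.choose p.finite), p.part k

/-- Row `k` (0-indexed) has an addable box at its end. -/
def AddableRow (p : Partn) (k : ℕ) : Prop :=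
  k = 0 ∨ p.part k < p.part (k - 1)

/-- Row `k` (0-indexed) has a removable box at its end. -/
def RemovableRow (p : Partn) (k : ℕ) : Prop :=
  p.part (k + 1) < p.part k

/-- The shifted content `x - y + s_i` of the addable box `(part k + 1, k + 1)` in row `k`
(0-indexed) of the `i`-th component. -/
def contA {ℓ : ℕ} (s : Fin ℓ → ℤ) (lam : Fin ℓ → Partn) (i : Fin ℓ) (k : ℕ) : ℤ :=
  ((lam i).part k : ℤ) - k + s i

/-- The shifted content `x - y + s_i` of the removable box `(part k, k + 1)` in row `k`
(0-indexed) of the `i`-th component. -/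
def contR {ℓ : ℕ} (s : Fin ℓ → ℤ) (lam : Fin ℓ → Partn) (i : Fin ℓ) (k : ℕ) : ℤ :=
  ((lam i).part k : ℤ) - ((k : ℤ) + 1) + s i

/-- Uglov's ordering key `ℓ·cont(b) + e·i` of a box `b` in the `i`-th component
(components numbered `1, …, ℓ`): boxes are listed in the signature in order of strictly
decreasing key. -/
def keyOf (e ℓ : ℕ) (c : ℤ) (i : Fin ℓ) : ℤ :=
  (ℓ : ℤ) * c + (e : ℤ) * ((i : ℕ) + 1)

open Classical in
/-- The letter of residue `z` and Uglov key `key` coming from component `i`: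
`some true` ('+') for an addable box, `some false` ('−') for a removable box,
`none` if there is no such box. -/
noncomputable def letterAt (e ℓ : ℕ) (s : Fin ℓ → ℤ) (lam : Fin ℓ → Partn)
    (z : ZMod e) (key : ℤ) (i : Fin ℓ) : Option Bool :=
  if ∃ k, AddableRow (lam i) k ∧ ((contA s lam i k : ℤ) : ZMod e) = z ∧
      keyOf e ℓ (contA s lam i k) i = key then some true
  else if ∃ k, RemovableRow (lam i) k ∧ ((contR s lam i k : ℤ) : ZMod e) = z ∧
      keyOf e ℓ (contR s lam i k) i = key then some false
  else none

/-- A bound such that every addable or removable box of `lam` has Uglov key of absolute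
value at most `M e ℓ s lam`. -/
noncomputable def M (e ℓ : ℕ) (s : Fin ℓ → ℤ) (lam : Fin ℓ → Partn) : ℕ :=
  (ℓ + e) * ((∑ i : Fin ℓ,
    ((lam i).part 0 + Classical.choose (lam i).finite + (s i).natAbs + 2)) + ℓ + 2)

/-- The `z`-signature of the multipartition `lam`: all letters of residue `z`, listed in
order of decreasing Uglov key `ℓ·cont(b) + e·i`. -/
noncomputable def word (e ℓ : ℕ) (s : Fin ℓ → ℤ) (lam : Fin ℓ → Partn) (z : ZMod e) :
    List Bool :=
  (List.range (2 * M e ℓ s lam + 1)).flatMap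
    (fun t => (List.finRange ℓ).filterMap
      (fun i => letterAt e ℓ s lam z ((M e ℓ s lam : ℤ) - t) i))

/-- Repeatedly delete consecutive subwords `−+` (i.e. `false, true`) until none remain. -/
def reduce : List Bool → List Bool
  | [] => []
  | a :: w =>
    match a, reduce w with
    | false, true :: tail => tail
    | _, r => a :: r

open Finset

lemma count_true_add_count_false_reduce (w : List Bool) :
    w.count true + (reduce w).count false = (reduce w).count true + w.count false := by
  induction w with
  | nil => rfl
  | cons a w ih =>
    rcases a with _ | _ <;> rcases h : reduce w with _ | ⟨_ | _, t⟩ <;>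
      simp_all [reduce] <;> omega

lemma count_false_reduce_le_reduce_append (u v : List Bool) :
    (reduce v).count false ≤ (reduce (u ++ v)).count false := by
  induction u with
  | nil => rfl
  | cons a u ih =>
    refine ih.trans ?_
    rcases a with _ | _ <;> rcases h : reduce (u ++ v) with _ | ⟨_ | _, t⟩ <;>
      simp_all [reduce]

lemma count_false_le_count_true_of_false_notMem_reduce {u v : List Bool}
    (h : false ∉ reduce (u ++ v)) : v.count false ≤ v.count true := by
  have hv : (reduce v).count false = 0 :=
    Nat.eq_zero_of_le_zero <| List.count_eq_zero.2 h ▸ count_false_reduce_le_reduce_append u v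
  have := count_true_add_count_false_reduce v
  omega

lemma List.count_flatMap_range' {α : Type*} [BEq α] (f : ℕ → List α) (a n : ℕ) (b : α) :
    ((List.range' a n).flatMap f).count b = ∑ x ∈ Finset.range n, (f (a + x)).count b := by
  rw [List.count_flatMap, List.range'_eq_map_range, Finset.sum_eq_multiset_sum, Finset.range_val,
    Multiset.range, Multiset.map_coe, Multiset.sum_coe, List.map_map]
  rfl

lemma List.count_filterMap_finRange {α : Type*} [DecidableEq α] {ℓ : ℕ} {f : Fin ℓ → Option α}
    {j : Fin ℓ} (h : ∀ i, i ≠ j → f i = none) (b : α) :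
    ((List.finRange ℓ).filterMap f).count b = if f j = some b then 1 else 0 := by
  have hcount := (List.nodup_finRange ℓ).card_eq_countP (P := fun i => f i = some b)
  rw [List.toFinset_finRange, Finset.card_filter, Finset.sum_eq_single j] at hcount
  · rw [List.count_filterMap, hcount]
    exact List.countP_congr fun _ _ => by simp
  · intro i _ hij
    simp [h i hij]
  · simp

/-- On the abacus with bead set `B`, the signature letter of content `c`: `+` (`true`, an addable
box) or `−` (`false`, a removable box). -/
def SignLetter (B : Set ℤ) : Bool → ℤ → Prop
  | true, c => c ∈ B ∧ c + 1 ∉ B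
  | false, c => c ∉ B ∧ c + 1 ∈ B

open Classical in
/-- The number of gaps among `m, m - e, m - 2e, …`, when every position `≤ L` is a bead. -/
noncomputable def gapCount (B : Set ℤ) (L : ℤ) (e : ℕ) (m : ℤ) : ℕ :=
  #{q ∈ range (m - L).toNat | m - e * (q : ℕ) ∉ B}

section Abacus

open Classical

variable {B : Set ℤ} {L : ℤ} {e : ℕ}

lemma le_of_signLetter (hL : ∀ c ≤ L, c ∈ B) {b : Bool} {c : ℤ} (h : SignLetter B b c) :
    L ≤ c := by
  by_contra! hc
  cases b
  · exact h.1 (hL c hc.le)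
  · exact h.2 (hL (c + 1) (by omega))

lemma gapCount_of_le {m : ℤ} (hm : m ≤ L) : gapCount B L e m = 0 := by
  simp [gapCount, Int.toNat_eq_zero.2 (by omega : m - L ≤ 0)]

variable (he : 0 < e) (hL : ∀ c ≤ L, c ∈ B)
include he hL

lemma gapCount_eq_card_range {m : ℤ} {R : ℕ} (hR : m - L ≤ R) :
    gapCount B L e m = #{q ∈ range R | m - e * (q : ℕ) ∉ B} := by
  unfold gapCount
  congr 1
  ext q
  simp only [mem_filter, mem_range]
  refine ⟨fun ⟨hq, hgap⟩ => ⟨by omega, hgap⟩, fun ⟨_, hgap⟩ => ⟨?_, hgap⟩⟩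
  by_contra! hq
  have : (q : ℤ) ≤ e * q := le_mul_of_one_le_left (by positivity) (by exact_mod_cast he)
  exact hgap (hL _ (by omega))

lemma gapCount_eq_gapCount_sub_add (m : ℤ) :
    gapCount B L e m = gapCount B L e (m - e) + if m ∈ B then 0 else 1 := by
  rw [gapCount_eq_card_range he hL (R := (m - L).toNat + 1) (by omega),
    gapCount_eq_card_range he hL (m := m - e) (R := (m - L).toNat) (by omega),
    card_filter, card_filter, sum_range_succ']
  congr 1
  · refine sum_congr rfl fun q _ => ?_
    rw [show m - e * ((q + 1 : ℕ) : ℤ) = m - e - e * q by push_cast; ring]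
  · simp

lemma gapCount_succ_add_card_signLetter {m : ℤ} {R : ℕ} (hR : m + 1 - L ≤ R) :
    gapCount B L e (m + 1) + #{q ∈ range R | SignLetter B false (m - e * (q : ℕ))} =
      gapCount B L e m + #{q ∈ range R | SignLetter B true (m - e * (q : ℕ))} := by
  rw [gapCount_eq_card_range he hL hR, gapCount_eq_card_range he hL (by omega : m - L ≤ R)]
  simp only [card_filter, ← sum_add_distrib]
  refine sum_congr rfl fun q _ => ?_
  rw [show m + 1 - e * q = m - e * q + 1 by ring]
  by_cases h₀ : m - e * q ∈ B <;> by_cases h₁ : m - e * q + 1 ∈ B <;> simp [SignLetter, h₀, h₁]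

lemma gapCount_eq_of_mem {b y : ℤ} (hmono : MonotoneOn (gapCount B L e) (Set.Iic b))
    (hb : b ∈ B) (hy : b - e ≤ y) (hyb : y ≤ b) : gapCount B L e y = gapCount B L e b := by
  have hstep := gapCount_eq_gapCount_sub_add he hL b
  rw [if_pos hb, add_zero] at hstep
  refine le_antisymm (hmono hyb (Set.mem_Iic.2 le_rfl) hyb) ?_
  rw [hstep]
  exact hmono (Set.mem_Iic.2 (by omega)) (Set.mem_Iic.2 hyb) hy

lemma dvd_sub_sub_one_of_monotoneOn {b' b : ℤ} (hmono : MonotoneOn (gapCount B L e) (Set.Iic b))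
    (hb' : b' ∈ B) (hb : b ∈ B) (hlt : b' < b) (hgap : ∀ x, b' < x → x < b → x ∉ B) :
    (e : ℤ) ∣ b - b' - 1 := by
  set H := gapCount B L e
  let W : ℤ → ℤ := fun x => ∑ q ∈ range e, (H (x - q) : ℤ)
  have hW : ∀ x, W x - W (x - 1) = H x - H (x - e) := by
    intro x
    have h := (sum_range_succ (fun q : ℕ => (H (x - q) : ℤ)) e).symm.trans
      (sum_range_succ' (fun q : ℕ => (H (x - q) : ℤ)) e)
    simp only [Nat.cast_add, Nat.cast_one, Nat.cast_zero, sub_zero, sub_add_eq_sub_sub,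
      sub_right_comm x _ (1 : ℤ)] at h
    simp only [W]
    linarith
  have hW_bead : ∀ y ∈ B, y ≤ b → W y = e * H y ∧ W (y - 1) = e * H y := by
    intro y hy hyb
    have hmono' := hmono.mono (Set.Iic_subset_Iic.2 hyb)
    constructor <;>
    · rw [← nsmul_eq_mul, ← card_range e, ← sum_const]
      refine sum_congr rfl fun q hq => ?_
      rw [mem_range] at hq
      exact congrArg Nat.cast (gapCount_eq_of_mem he hL hmono' hy (by omega) (by omega))
  have hrun : ∀ n : ℕ, b' + n < b → W (b' + n) = W b' + n := by
    intro n
    induction n with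
    | zero => simp
    | succ n ih =>
      intro hn
      rw [Nat.cast_succ, ← add_assoc] at hn ⊢
      have hstep := gapCount_eq_gapCount_sub_add he hL (b' + n + 1)
      rw [if_neg (hgap _ (by omega) hn)] at hstep
      have hstep' : (H (b' + n + 1) : ℤ) = H (b' + n + 1 - e) + 1 := by exact_mod_cast hstep
      have := hW (b' + n + 1)
      rw [add_sub_cancel_right, ih (by omega)] at this
      linarith
  obtain ⟨hWb', -⟩ := hW_bead b' hb' hlt.le
  obtain ⟨-, hWb⟩ := hW_bead b hb le_rfl
  obtain ⟨n, hn⟩ : ∃ n : ℕ, b' + n = b - 1 := ⟨(b - 1 - b').toNat, by omega⟩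
  have := hrun n (by omega)
  rw [hn, hWb, hWb'] at this
  exact ⟨H b - H b', by linear_combination -this - hn⟩

end Abacus

namespace Partn

variable (p : Partn) {σ : ℤ}

def beta (σ : ℤ) (k : ℕ) : ℤ := p.part k - k + σ

lemma beta_strictAnti (σ : ℤ) : StrictAnti (p.beta σ) :=
  strictAnti_nat_of_succ_lt fun k => by have := p.antitone k; simp only [beta]; push_cast; omega

lemma part_eq_zero_of_le {k : ℕ} (hk : Classical.choose p.finite ≤ k) : p.part k = 0 :=
  Classical.choose_spec p.finite k hk

lemma mem_range_beta_of_le {c : ℤ} (hc : c ≤ σ - Classical.choose p.finite) :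
    c ∈ Set.range (p.beta σ) :=
  ⟨(σ - c).toNat, by rw [beta, p.part_eq_zero_of_le (by omega)]; push_cast; omega⟩

lemma le_of_mem_range_beta {c : ℤ} (hc : c ∈ Set.range (p.beta σ)) : c ≤ σ + p.part 0 := by
  obtain ⟨k, rfl⟩ := hc
  have := (p.beta_strictAnti σ).antitone (Nat.zero_le k)
  simp only [beta, Nat.cast_zero] at this ⊢
  omega

lemma notMem_range_beta {k : ℕ} {c : ℤ} (h₁ : p.beta σ (k + 1) < c) (h₂ : c < p.beta σ k) :
    c ∉ Set.range (p.beta σ) := by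
  rintro ⟨k', rfl⟩
  have hlt : ∀ {a b}, p.beta σ a < p.beta σ b ↔ b < a := (p.beta_strictAnti σ).lt_iff_gt
  rw [hlt] at h₁ h₂
  omega

lemma exists_addableRow_iff {c : ℤ} :
    (∃ k, AddableRow p k ∧ p.beta σ k = c) ↔
      c ∈ Set.range (p.beta σ) ∧ c + 1 ∉ Set.range (p.beta σ) := by
  have hlt : ∀ {a b}, p.beta σ a < p.beta σ b ↔ b < a := (p.beta_strictAnti σ).lt_iff_gt
  constructor
  · rintro ⟨k, hk, rfl⟩
    refine ⟨⟨k, rfl⟩, ?_⟩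
    rintro ⟨k', hk'⟩
    have hk'k : k' < k := hlt.1 (by omega)
    rcases hk with rfl | hk
    · omega
    · have := (p.beta_strictAnti σ).antitone (show k' ≤ k - 1 by omega)
      simp only [beta] at this hk'
      push_cast [Nat.one_le_iff_ne_zero.2 (by omega : k ≠ 0)] at this
      omega
  · rintro ⟨⟨k, rfl⟩, hgap⟩
    refine ⟨k, ?_, rfl⟩
    by_contra! hk
    simp only [AddableRow, not_or, not_lt] at hk
    have := p.antitone (k - 1)
    rw [Nat.sub_add_cancel (by omega)] at this
    exact hgap ⟨k - 1, by simp only [beta]; push_cast [Nat.one_le_iff_ne_zero.2 hk.1]; omega⟩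

lemma exists_removableRow_iff {c : ℤ} :
    (∃ k, RemovableRow p k ∧ p.beta σ k = c + 1) ↔
      c ∉ Set.range (p.beta σ) ∧ c + 1 ∈ Set.range (p.beta σ) := by
  have hlt : ∀ {a b}, p.beta σ a < p.beta σ b ↔ b < a := (p.beta_strictAnti σ).lt_iff_gt
  constructor
  · rintro ⟨k, hk, hc⟩
    refine ⟨?_, ⟨k, hc⟩⟩
    rintro ⟨k', hk'⟩
    have hkk' : k < k' := hlt.1 (by omega)
    have := (p.beta_strictAnti σ).antitone (show k + 1 ≤ k' by omega)
    simp only [beta, RemovableRow] at this hk' hc hk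
    push_cast at this
    omega
  · rintro ⟨hgap, ⟨k, hc⟩⟩
    refine ⟨k, ?_, hc⟩
    by_contra hk
    have := p.antitone k
    simp only [RemovableRow, not_lt] at hk
    exact hgap ⟨k + 1, by simp only [beta] at hc ⊢; push_cast; omega⟩

lemma sum_range_part_le_size (n : ℕ) : ∑ k ∈ range n, p.part k ≤ p.size := by
  calc ∑ k ∈ range n, p.part k
      ≤ ∑ k ∈ range (max n (Classical.choose p.finite)), p.part k :=
        sum_le_sum_of_subset (range_subset_range.2 (le_max_left _ _))
    _ = p.size := by
        refine (sum_subset (range_subset_range.2 (le_max_right _ _)) ?_).symm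
        intro k _ hk
        exact p.part_eq_zero_of_le (by simpa using hk)

lemma part_zero_le_size : p.part 0 ≤ p.size := by
  simpa using p.sum_range_part_le_size 1

lemma succ_le_size_of_pos {k : ℕ} (hk : 0 < p.part k) : k + 1 ≤ p.size := by
  calc k + 1 = ∑ _t ∈ range (k + 1), 1 := by simp
    _ ≤ ∑ t ∈ range (k + 1), p.part t :=
        sum_le_sum fun t ht =>
          hk.trans_le (antitone_nat_of_succ_le p.antitone (mem_range_succ_iff.1 ht))
    _ ≤ p.size := p.sum_range_part_le_size _

lemma le_size_of_addableRow {k : ℕ} (hk : AddableRow p k) : k ≤ p.size := by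
  rcases hk with rfl | hk
  · exact Nat.zero_le _
  · have := p.succ_le_size_of_pos (k := k - 1) (by omega)
    omega

lemma lt_size_of_removableRow {k : ℕ} (hk : RemovableRow p k) : k < p.size :=
  p.succ_le_size_of_pos (by unfold RemovableRow at hk; omega)

def div (e : ℕ) : Partn where
  part k := p.part k / e
  antitone k := Nat.div_le_div_right (p.antitone k)
  finite := p.finite.imp fun _ h k hk => by rw [h k hk, Nat.zero_div]

lemma dvd_part_of_dvd_sub_succ {e : ℕ} (h : ∀ k, (e : ℤ) ∣ p.part k - p.part (k + 1)) (k : ℕ) :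
    e ∣ p.part k := by
  have htele : ∀ n, (e : ℤ) ∣ p.part k - p.part (k + n) := by
    intro n
    induction n with
    | zero => simp
    | succ n ih =>
      rw [← add_assoc, show (p.part k : ℤ) - p.part (k + n + 1) =
        (p.part k - p.part (k + n)) + (p.part (k + n) - p.part (k + n + 1)) by ring]
      exact dvd_add ih (h _)
  have := htele (Classical.choose p.finite)
  rwa [p.part_eq_zero_of_le (k := k + _) (by omega), Nat.cast_zero, sub_zero,
    Int.natCast_dvd_natCast] at this

lemma dvd_part_of_monotoneOn_gapCount {e : ℕ} (he : 0 < e)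
    (hmono : MonotoneOn (gapCount (Set.range (p.beta σ)) (σ - Classical.choose p.finite) e)
      (Set.Iic (σ + p.part 0))) (k : ℕ) : e ∣ p.part k := by
  refine p.dvd_part_of_dvd_sub_succ (fun k => ?_) k
  have hrun := dvd_sub_sub_one_of_monotoneOn he (fun c hc => p.mem_range_beta_of_le hc)
    (hmono.mono (Set.Iic_subset_Iic.2 (p.le_of_mem_range_beta ⟨k, rfl⟩))) ⟨k + 1, rfl⟩ ⟨k, rfl⟩
    (p.beta_strictAnti σ k.lt_succ_self) fun c h₁ h₂ => p.notMem_range_beta h₁ h₂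
  convert hrun using 1
  simp only [beta]
  push_cast
  ring

end Partn

section Signature

open Classical

variable {e ℓ : ℕ} {s : Fin ℓ → ℤ} {lam : Fin ℓ → Partn}

lemma keyOf_sub_keyOf (c c' : ℤ) (j : Fin ℓ) :
    keyOf e ℓ c j - keyOf e ℓ c' j = ℓ * (c - c') := by
  unfold keyOf
  ring

lemma keyOf_lt_keyOf (he : 0 < e) {m c : ℤ} (hmc : m < c) (hdvd : (e : ℤ) ∣ c - m)
    (i j : Fin ℓ) : keyOf e ℓ m j < keyOf e ℓ c i := by
  have hec : (e : ℤ) ≤ c - m := Int.le_of_dvd (by omega) hdvd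
  have hj : ((j : ℕ) : ℤ) + 1 ≤ ℓ := by have := j.isLt; omega
  have hi : (0 : ℤ) ≤ (i : ℕ) := by positivity
  unfold keyOf
  nlinarith

lemma contR_eq (i : Fin ℓ) (k : ℕ) : contR s lam i k = (lam i).beta (s i) k - 1 := by
  unfold contR Partn.beta
  ring

lemma letterAt_eq_none (he : 0 < e) {m key : ℤ} {i j : Fin ℓ}
    (hm : m < s i - (lam i).size) (hkey : key ≤ keyOf e ℓ m j) :
    letterAt e ℓ s lam (m : ZMod e) key i = none := by
  have hfar : ∀ c : ℤ, s i - (lam i).size ≤ c → (c : ZMod e) = m → keyOf e ℓ c i ≠ key := by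
    intro c hc hres hck
    rw [ZMod.intCast_eq_intCast_iff_dvd_sub, ← dvd_neg, neg_sub] at hres
    have := keyOf_lt_keyOf he (by omega) hres i j
    omega
  unfold letterAt contA contR
  rw [if_neg, if_neg]
  · rintro ⟨k, hk, hres, hkey⟩
    exact hfar _ (by have := (lam i).lt_size_of_removableRow hk; omega) hres hkey
  · rintro ⟨k, hk, hres, hkey⟩
    exact hfar _ (by have := (lam i).le_size_of_addableRow hk; omega) hres hkey

lemma letterAt_eq_some_iff {z : ZMod e} {key : ℤ} {j : Fin ℓ} (b : Bool) :
    letterAt e ℓ s lam z key j = some b ↔ ∃ c, keyOf e ℓ c j = key ∧ (c : ZMod e) = z ∧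
      SignLetter (Set.range ((lam j).beta (s j))) b c := by
  have hA : (∃ k, AddableRow (lam j) k ∧ ((contA s lam j k : ℤ) : ZMod e) = z ∧
      keyOf e ℓ (contA s lam j k) j = key) ↔ ∃ c, keyOf e ℓ c j = key ∧ (c : ZMod e) = z ∧
        SignLetter (Set.range ((lam j).beta (s j))) true c := by
    simp only [SignLetter, ← (lam j).exists_addableRow_iff]
    constructor
    · rintro ⟨k, hk, hres, hkey⟩
      exact ⟨_, hkey, hres, k, hk, rfl⟩
    · rintro ⟨_, hkey, hres, k, hk, rfl⟩
      exact ⟨k, hk, hres, hkey⟩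
  have hR : (∃ k, RemovableRow (lam j) k ∧ ((contR s lam j k : ℤ) : ZMod e) = z ∧
      keyOf e ℓ (contR s lam j k) j = key) ↔ ∃ c, keyOf e ℓ c j = key ∧ (c : ZMod e) = z ∧
        SignLetter (Set.range ((lam j).beta (s j))) false c := by
    simp only [SignLetter, ← (lam j).exists_removableRow_iff, contR_eq]
    constructor
    · rintro ⟨k, hk, hres, hkey⟩
      exact ⟨_, hkey, hres, k, hk, by ring⟩
    · rintro ⟨c, hkey, hres, k, hk, hc⟩
      exact ⟨k, hk, by rwa [hc, add_sub_cancel_right], by rwa [hc, add_sub_cancel_right]⟩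
  have hRA : (∃ c, keyOf e ℓ c j = key ∧ (c : ZMod e) = z ∧
        SignLetter (Set.range ((lam j).beta (s j))) false c) →
      ¬ ∃ c, keyOf e ℓ c j = key ∧ (c : ZMod e) = z ∧
        SignLetter (Set.range ((lam j).beta (s j))) true c := by
    rintro ⟨c, hkey, -, hgap, -⟩ ⟨c', hkey', -, hbead, -⟩
    have := keyOf_sub_keyOf (e := e) c c' j
    rw [hkey, hkey', sub_self, eq_comm, mul_eq_zero, sub_eq_zero] at this
    rcases this with h | rfl
    · exact absurd h (by exact_mod_cast j.pos.ne')
    · exact hgap hbead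
  unfold letterAt
  rw [hA, hR]
  cases b <;> split_ifs with h₁ h₂ <;> simp_all

lemma card_filter_letterAt_eq (he : 0 < e) {j : Fin ℓ} {m : ℤ} {n R : ℕ}
    (hn : ℓ * (m - (s j - Classical.choose (lam j).finite)) < n)
    (hR : m + 1 - (s j - Classical.choose (lam j).finite) ≤ R) (b : Bool) :
    #{x ∈ range n | letterAt e ℓ s lam (m : ZMod e) (keyOf e ℓ m j - (x : ℕ)) j = some b} =
      #{q ∈ range R | SignLetter (Set.range ((lam j).beta (s j))) b (m - e * (q : ℕ))} := by
  have hL : ∀ c ≤ s j - Classical.choose (lam j).finite, c ∈ Set.range ((lam j).beta (s j)) :=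
    fun c hc => (lam j).mem_range_beta_of_le hc
  have hℓ : (0 : ℤ) < ℓ := by exact_mod_cast j.pos
  symm
  refine card_bij (fun q _ => ℓ * e * q) ?_ ?_ ?_
  · intro q hq
    simp only [mem_filter, mem_range] at hq ⊢
    have hc := le_of_signLetter hL hq.2
    refine ⟨?_, (letterAt_eq_some_iff b).2 ⟨m - e * q, ?_, ?_, hq.2⟩⟩
    · have : (ℓ : ℤ) * (e * q) ≤ ℓ * (m - (s j - Classical.choose (lam j).finite)) :=
        mul_le_mul_of_nonneg_left (by omega) hℓ.le
      zify
      linarith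
    · have := keyOf_sub_keyOf (e := e) m (m - e * q) j
      push_cast
      linarith
    · simp
  · intro q₁ _ q₂ _ h
    exact Nat.eq_of_mul_eq_mul_left (Nat.mul_pos j.pos he) h
  · intro x hx
    simp only [mem_filter, mem_range] at hx
    obtain ⟨c, hkey, hres, hsign⟩ := (letterAt_eq_some_iff b).1 hx.2
    obtain ⟨d, hd⟩ := (ZMod.intCast_eq_intCast_iff_dvd_sub _ _ _).1 hres
    have hx' : (x : ℤ) = ℓ * (e * d) := by
      have := keyOf_sub_keyOf (e := e) m c j
      rw [← hd]
      linarith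
    have hd₀ : 0 ≤ d := by
      by_contra! hd₀
      have : (ℓ : ℤ) * (e * d) < 0 :=
        mul_neg_of_pos_of_neg hℓ (mul_neg_of_pos_of_neg (by omega) hd₀)
      omega
    have hcL := le_of_signLetter hL hsign
    refine ⟨d.toNat, ?_, ?_⟩
    · simp only [mem_filter, mem_range]
      rw [Int.toNat_of_nonneg hd₀, show m - e * d = c by linarith]
      refine ⟨?_, hsign⟩
      have : d ≤ e * d := le_mul_of_one_le_left hd₀ (by exact_mod_cast he)
      omega
    · zify
      rw [Int.toNat_of_nonneg hd₀, hx']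
      ring

lemma abs_keyOf_le_M {j : Fin ℓ} {c : ℤ} (h₁ : s j - Classical.choose (lam j).finite ≤ c)
    (h₂ : c ≤ s j + (lam j).part 0) : |keyOf e ℓ c j| ≤ M e ℓ s lam := by
  set T := ∑ i : Fin ℓ, ((lam i).part 0 + Classical.choose (lam i).finite + (s i).natAbs + 2)
  set D := Classical.choose (lam j).finite
  have hT : (lam j).part 0 + D + (s j).natAbs + 2 ≤ T :=
    single_le_sum (f := fun i => (lam i).part 0 + Classical.choose (lam i).finite +
      (s i).natAbs + 2) (fun i _ => Nat.zero_le _) (mem_univ j)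
  have hc : |c| + 2 ≤ T := by
    zify at hT
    have := abs_cases c
    have := abs_cases (s j)
    omega
  have hj : ((j : ℕ) : ℤ) + 1 ≤ ℓ := by have := j.isLt; omega
  have hkey : |keyOf e ℓ c j| ≤ ℓ * |c| + e * ℓ := by
    unfold keyOf
    refine (abs_add_le _ _).trans (add_le_add ?_ ?_)
    · rw [abs_mul, Nat.abs_cast]
    · rw [abs_mul, Nat.abs_cast, abs_of_nonneg (by positivity)]
      exact mul_le_mul_of_nonneg_left hj (by positivity)
  change _ ≤ (((ℓ + e) * (T + ℓ + 2) : ℕ) : ℤ)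
  push_cast
  nlinarith [abs_nonneg c]

lemma word_eq_append (z : ZMod e) {t : ℕ} (ht : t ≤ 2 * M e ℓ s lam + 1) :
    word e ℓ s lam z =
      (List.range' 0 t).flatMap (fun t : ℕ => (List.finRange ℓ).filterMap
        (letterAt e ℓ s lam z ((M e ℓ s lam : ℤ) - t))) ++
      (List.range' t (2 * M e ℓ s lam + 1 - t)).flatMap (fun t : ℕ => (List.finRange ℓ).filterMap
        (letterAt e ℓ s lam z ((M e ℓ s lam : ℤ) - t))) := by
  have hsplit := List.range'_append (s := 0) (m := t) (n := 2 * M e ℓ s lam + 1 - t) (step := 1)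
  rw [Nat.add_sub_cancel' ht, zero_add, one_mul] at hsplit
  rw [← List.flatMap_append, hsplit, word, List.range_eq_range']
  simp [List.flatMap_assoc]

lemma gapCount_le_gapCount_succ_of_singular (he : 0 < e) {j : Fin ℓ} {m : ℤ}
    (hsing : false ∉ reduce (word e ℓ s lam (m : ZMod e)))
    (hfar : ∀ i, i ≠ j → m < s i - (lam i).size) (hm : m ≤ s j + (lam j).part 0) :
    gapCount (Set.range ((lam j).beta (s j))) (s j - Classical.choose (lam j).finite) e m ≤
      gapCount (Set.range ((lam j).beta (s j))) (s j - Classical.choose (lam j).finite) e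
        (m + 1) := by
  set L := s j - ((Classical.choose (lam j).finite : ℕ) : ℤ)
  have hL : ∀ c ≤ L, c ∈ Set.range ((lam j).beta (s j)) :=
    fun c hc => (lam j).mem_range_beta_of_le hc
  rcases lt_or_ge m L with hmL | hLm
  · rw [gapCount_of_le hmL.le]
    exact Nat.zero_le _
  -- in the signature, the letters of residue `m` from key `keyOf m j` on all come from `lam j`
  have hkm := abs_le.1 (abs_keyOf_le_M (e := e) hLm hm)
  have hkL := abs_le.1 (abs_keyOf_le_M (e := e) (c := L) le_rfl (by omega))
  have hℓ := keyOf_sub_keyOf (e := e) m L j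
  set t := ((M e ℓ s lam : ℤ) - keyOf e ℓ m j).toNat
  have hsuffix : ∀ b, ((List.range' t (2 * M e ℓ s lam + 1 - t)).flatMap fun t : ℕ =>
      (List.finRange ℓ).filterMap (letterAt e ℓ s lam m ((M e ℓ s lam : ℤ) - t))).count b =
        #{q ∈ range (m + 1 - L).toNat |
            SignLetter (Set.range ((lam j).beta (s j))) b (m - e * (q : ℕ))} := by
    intro b
    have ht : (t : ℤ) = M e ℓ s lam - keyOf e ℓ m j := Int.toNat_of_nonneg (by omega)
    have hn : (ℓ : ℤ) * (m - L) < ((2 * M e ℓ s lam + 1 - t : ℕ) : ℤ) := by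
      rw [Nat.cast_sub (by omega)]
      push_cast
      omega
    have hR : m + 1 - L ≤ ((m + 1 - L).toNat : ℤ) := Int.self_le_toNat _
    rw [List.count_flatMap_range', ← card_filter_letterAt_eq he hn hR b, card_filter]
    refine sum_congr rfl fun x _ => ?_
    rw [show (M e ℓ s lam : ℤ) - (t + x : ℕ) = keyOf e ℓ m j - x by push_cast; omega,
      List.count_filterMap_finRange fun i hi => letterAt_eq_none (j := j) he (hfar i hi) (by omega)]
  have ht : t ≤ 2 * M e ℓ s lam + 1 := by omega
  have hcount := count_false_le_count_true_of_false_notMem_reduce (word_eq_append _ ht ▸ hsing)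
  rw [hsuffix, hsuffix] at hcount
  have := gapCount_succ_add_card_signLetter he hL (R := (m + 1 - L).toNat) (m := m) (by omega)
  omega

lemma lt_sub_size_of_ne {N : ℕ} {j : Fin ℓ} (hs : ∀ i, i ≠ j → s j < s i - N)
    (hsize : ∑ i, (lam i).size ≤ N) {i : Fin ℓ} (hij : i ≠ j) :
    s j + (lam j).part 0 < s i - (lam i).size := by
  have := add_le_sum (f := fun i => (lam i).size) (fun _ _ => Nat.zero_le _)
    (mem_univ i) (mem_univ j) hij
  have := (lam j).part_zero_le_size
  have := hs i hij
  omega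

lemma monotoneOn_gapCount_of_singular (he : 0 < e) {N : ℕ} {j : Fin ℓ}
    (hs : ∀ i, i ≠ j → s j < s i - N) (hsize : ∑ i, (lam i).size ≤ N)
    (hsing : ∀ z : ZMod e, false ∉ reduce (word e ℓ s lam z)) :
    MonotoneOn
      (gapCount (Set.range ((lam j).beta (s j))) (s j - Classical.choose (lam j).finite) e)
      (Set.Iic (s j + (lam j).part 0)) := by
  refine monotoneOn_of_le_succ Set.ordConnected_Iic fun m _ _ hm => ?_
  rw [Order.succ_eq_add_one, Set.mem_Iic] at hm
  exact gapCount_le_gapCount_succ_of_singular he (hsing m)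
    (fun i hij => by have := lt_sub_size_of_ne hs hsize hij; omega) (by omega)

end Signature

theorem component_divisible_of_singular_general (e ℓ : ℕ) (he : 1 ≤ e)
    (N : ℕ) (s : Fin ℓ → ℤ) (j : Fin ℓ)
    (hs : ∀ i : Fin ℓ, i ≠ j → s j < s i - (N : ℤ))
    (lam : Fin ℓ → Partn) (hsize : ∑ i : Fin ℓ, (lam i).size ≤ N)
    (hsing : ∀ z : ZMod e, false ∉ reduce (word e ℓ s lam z)) :
    ∃ μ : Partn, ∀ k, (lam j).part k = e * μ.part k := by
  have hdvd := (lam j).dvd_part_of_monotoneOn_gapCount he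
    (monotoneOn_gapCount_of_singular he hs hsize hsing)
  exact ⟨(lam j).div e, fun k => (Nat.mul_div_cancel' (hdvd k)).symm⟩

/-- If `s_j < s_i − N` for all `i ≠ j` and `λ` is an `ℓ`-multipartition with
`|λ| ≤ N` that is singular for the level-`ℓ` Uglov `ŝl_e`-crystal with charges `s`
(no '−' remains in any reduced `z`-signature), then the component `λ^{(j)}` is
divisible by `e`. -/
theorem component_divisible_of_singular (e ℓ : ℕ) (he : 1 ≤ e) (hℓ : 1 ≤ ℓ)
    (N : ℕ) (hN : 0 < N) (s : Fin ℓ → ℤ) (j : Fin ℓ)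
    (hs : ∀ i : Fin ℓ, i ≠ j → s j < s i - (N : ℤ))
    (lam : Fin ℓ → Partn) (hsize : ∑ i : Fin ℓ, (lam i).size ≤ N)
    (hsing : ∀ z : ZMod e, false ∉ reduce (word e ℓ s lam z)) :
    ∃ μ : Partn, ∀ k, (lam j).part k = e * μ.part k :=
  component_divisible_of_singular_general e ℓ he N s j hs lam hsize hsing
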